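/- Let A be a unital *-subalgebra of L(H), H finite-dimensional, {P_i}_{i=1}^p a maximal family of nonzero pairwise orthogonal self-adjoint projectors in A summing to the identity, such that P_i A P_j ≠ 0 for all i, j. Then all P_i have the same rank q, and p·q = dim H. -/

import Mathlib

open scoped BigOperators

/-- A family of nonzero, self-adjoint, pairwise orthogonal projectors in `A`. -/
def IsOrthProjFamily {E : Type*} [NormedAddCommGroup E] [InnerProductSpace ℂ E]
    [FiniteDimensional ℂ E] (A : StarSubalgebra ℂ (E →ₗ[ℂ] E))
    {p : ℕ} (P : Fin p → (E →ₗ[ℂ] E)) : Prop :=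
  (∀ i, P i ∈ A) ∧ (∀ i, P i ≠ 0) ∧ (∀ i, star (P i) = P i) ∧
    (∀ i j, P i * P j = if i = j then P i else 0)

/-- Maximality: no such family spans a strictly larger subalgebra. -/
def IsMaximalOrthProjFamily {E : Type*} [NormedAddCommGroup E] [InnerProductSpace ℂ E]
    [FiniteDimensional ℂ E] (A : StarSubalgebra ℂ (E →ₗ[ℂ] E))
    {p : ℕ} (P : Fin p → (E →ₗ[ℂ] E)) : Prop :=
  IsOrthProjFamily A P ∧
    ∀ (m : ℕ) (Q : Fin m → (E →ₗ[ℂ] E)), IsOrthProjFamily A Q →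
      ¬ Algebra.adjoin ℂ (Set.range P) < Algebra.adjoin ℂ (Set.range Q)

/-!
By maximality no `P j` splits into two nonzero projections of `A`. Since the spectral projections
of a self-adjoint element are polynomials in it, every self-adjoint element of the corner
`P j A P j` is therefore a scalar multiple of `P j`. For `N = P i * M * P j ≠ 0` this applies to
`N† N` and `N N†`, so `rank P j = rank N = rank N† = rank P i`; taking traces in `∑ i, P i = 1`
gives `p * q = dim E`.
-/

open Polynomial

namespace OrthogonalIdempotents

variable {R : Type*} [Ring R]

theorem cons {n : ℕ} {e : Fin n → R} (he : OrthogonalIdempotents e) {x : R}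
    (hx : IsIdempotentElem x) (hxe : ∀ i, x * e i = 0) (hex : ∀ i, e i * x = 0) :
    OrthogonalIdempotents (Fin.cons x e : Fin (n + 1) → R) where
  idem := Fin.cases hx he.idem
  ortho i k hik := by
    cases i using Fin.cases <;> cases k using Fin.cases
    · exact absurd rfl hik
    · exact hxe _
    · exact hex _
    · exact he.ortho (fun h => hik (congrArg Fin.succ h))

theorem update {I : Type*} [DecidableEq I] {e : I → R} (he : OrthogonalIdempotents e) {j : I}
    {x : R} (hx : IsIdempotentElem x) (hxj : x * e j = x) (hjx : e j * x = x) :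
    OrthogonalIdempotents (Function.update e j x) := by
  refine ⟨fun i => ?_, fun i k hik => ?_⟩
  · rcases eq_or_ne i j with rfl | hij
    · simpa using hx
    · simpa [hij] using he.idem i
  · simp only [Function.update_apply]
    split_ifs with hi hk hk
    · exact absurd (hi.trans hk.symm) hik
    · subst hi; rw [← hxj, mul_assoc, he.ortho hik, mul_zero]
    · subst hk; rw [← hjx, ← mul_assoc, he.ortho hik, zero_mul]
    · exact he.ortho hik

theorem cons_sub_update {n : ℕ} {e : Fin n → R} (he : OrthogonalIdempotents e) {j : Fin n}
    {x : R} (hx : IsIdempotentElem x) (hxj : x * e j = x) (hjx : e j * x = x) :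
    OrthogonalIdempotents (Fin.cons (e j - x) (Function.update e j x) : Fin (n + 1) → R) := by
  have hxe : ∀ i, i ≠ j → x * e i = 0 := fun i hij => by
    rw [← hxj, mul_assoc, he.ortho hij.symm, mul_zero]
  have hex : ∀ i, i ≠ j → e i * x = 0 := fun i hij => by
    rw [← hjx, ← mul_assoc, he.ortho hij, zero_mul]
  refine (he.update hx hxj hjx).cons ?_ (fun i => ?_) (fun i => ?_)
  · rw [IsIdempotentElem, sub_mul, mul_sub, mul_sub, (he.idem j).eq, hjx, hxj, hx.eq, sub_self,
      sub_zero]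
  · rcases eq_or_ne i j with rfl | hij
    · rw [Function.update_self, sub_mul, hjx, hx.eq, sub_self]
    · rw [Function.update_of_ne hij, sub_mul, he.ortho hij.symm, hxe i hij, sub_self]
  · rcases eq_or_ne i j with rfl | hij
    · rw [Function.update_self, mul_sub, hxj, hx.eq, sub_self]
    · rw [Function.update_of_ne hij, mul_sub, he.ortho hij, hex i hij, sub_self]

theorem exists_mul_eq_smul_of_mem_adjoin {K I : Type*} [CommSemiring K] [Algebra K R]
    {e : I → R} (he : OrthogonalIdempotents e) (j : I) {a : R}
    (ha : a ∈ Algebra.adjoin K (Set.range e)) : ∃ c : K, a * e j = c • e j := by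
  classical
  induction ha using Algebra.adjoin_induction with
  | mem x hx =>
    obtain ⟨i, rfl⟩ := hx
    exact ⟨if i = j then 1 else 0, by rw [he.mul_eq]; split_ifs <;> simp [*]⟩
  | algebraMap r => exact ⟨r, Algebra.smul_def r (e j) |>.symm⟩
  | add x y _ _ hx hy =>
    obtain ⟨c, hc⟩ := hx
    obtain ⟨d, hd⟩ := hy
    exact ⟨c + d, by rw [add_mul, hc, hd, add_smul]⟩
  | mul x y _ _ hx hy =>
    obtain ⟨c, hc⟩ := hx
    obtain ⟨d, hd⟩ := hy
    exact ⟨d * c, by rw [mul_assoc, hd, mul_smul_comm, hc, smul_smul]⟩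

theorem eq_zero_or_eq_of_mem_adjoin {K I : Type*} [Field K] [Algebra K R]
    {e : I → R} (he : OrthogonalIdempotents e) {j : I} {a : R}
    (ha : a ∈ Algebra.adjoin K (Set.range e)) (haa : IsIdempotentElem a) (haj : a * e j = a) :
    a = 0 ∨ a = e j := by
  obtain ⟨c, hc⟩ := he.exists_mul_eq_smul_of_mem_adjoin j ha
  rw [haj] at hc
  rcases eq_or_ne c 0 with rfl | hc0
  · exact Or.inl (by simpa using hc)
  · have hcc : (c * c) • e j = c • e j := by
      simpa only [hc, smul_mul_smul_comm, (he.idem j).eq] using haa.eq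
    right
    calc a = c⁻¹ • (c * c) • e j := by rw [mul_smul, inv_smul_smul₀ hc0, hc]
      _ = e j := by rw [hcc, inv_smul_smul₀ hc0]

end OrthogonalIdempotents

theorem IsSelfAdjoint.aeval {R S : Type*} [CommSemiring R] [StarRing R] [TrivialStar R]
    [Semiring S] [StarRing S] [Algebra R S] [StarModule R S] {a : S} (ha : IsSelfAdjoint a)
    (q : R[X]) : IsSelfAdjoint (aeval a q) := by
  rw [aeval_eq_sum_range]
  exact isSelfAdjoint_sum _ fun i _ => (IsSelfAdjoint.all _).smul (ha.pow i)

theorem Module.End.sum_finrank_range_eq_finrank {K V ι : Type*} [Field K] [CharZero K]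
    [AddCommGroup V] [Module K V] [FiniteDimensional K V] [Fintype ι] {e : ι → Module.End K V}
    (he : ∀ i, IsIdempotentElem (e i)) (hsum : ∑ i, e i = 1) :
    ∑ i, Module.finrank K (LinearMap.range (e i)) = Module.finrank K V := by
  apply Nat.cast_injective (R := K)
  rw [← LinearMap.trace_one, ← hsum, map_sum, Nat.cast_sum]
  exact Finset.sum_congr rfl fun i _ =>
    ((LinearMap.isProj_range_iff_isIdempotentElem _).mpr (he i)).trace.symm

section InnerProductSpace

variable {E : Type*} [NormedAddCommGroup E] [InnerProductSpace ℂ E] [FiniteDimensional ℂ E]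

theorem IsSelfAdjoint.exists_eigenprojection {B : E →ₗ[ℂ] E} (hB : IsSelfAdjoint B)
    (hB0 : B ≠ 0) :
    ∃ (t : ℂ) (q : ℝ[X]), IsSelfAdjoint (Polynomial.aeval B (q * X)) ∧
      IsIdempotentElem (Polynomial.aeval B (q * X)) ∧ Polynomial.aeval B (q * X) ≠ 0 ∧
      B * Polynomial.aeval B (q * X) = t • Polynomial.aeval B (q * X) := by
  have hsym := (LinearMap.isSymmetric_iff_isSelfAdjoint B).mpr hB
  set b := (hsym.eigenvectorBasis rfl).toBasis
  set μ := hsym.eigenvalues rfl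
  have hev (i) : Module.End.HasEigenvector B (μ i : ℂ) (b i) := by
    simpa [b] using hsym.hasEigenvector_eigenvectorBasis rfl i
  obtain ⟨i₀, hi₀⟩ : ∃ i, μ i ≠ 0 := by
    by_contra! h
    exact hB0 (b.ext fun i => by simp [(hev i).apply_eq_smul, h])
  -- `q * X` is then `1` at the eigenvalue `μ i₀` and `0` at all other eigenvalues and at `0`.
  obtain ⟨q, hq⟩ := (exists_eval_eq_iff μ fun i => if μ i = μ i₀ then (μ i₀)⁻¹ else 0).mpr
    fun i j hij => by simp only [hij]
  have hQ_basis (i) : Polynomial.aeval B (q * X) (b i) = if μ i = μ i₀ then b i else 0 := by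
    have hpoly : (q * X).eval (μ i) = if μ i = μ i₀ then 1 else 0 := by
      rw [eval_mul, eval_X, hq]
      split_ifs with h
      · rw [h, inv_mul_cancel₀ hi₀]
      · rw [zero_mul]
    rw [← aeval_map_algebraMap ℂ, Module.End.aeval_apply_of_hasEigenvector (hev i),
      eval_map_algebraMap, ← Complex.coe_algebraMap, aeval_algebraMap_apply_eq_algebraMap_eval,
      hpoly]
    split_ifs <;> simp
  refine ⟨μ i₀, q, hB.aeval _, b.ext fun i => ?_, fun hQ => ?_, b.ext fun i => ?_⟩
  · rw [Module.End.mul_apply, hQ_basis]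
    split_ifs with h
    · rw [hQ_basis, if_pos h]
    · rw [map_zero]
  · have := hQ_basis i₀
    rw [if_pos rfl, hQ, LinearMap.zero_apply] at this
    exact b.ne_zero i₀ this.symm
  · rw [Module.End.mul_apply, LinearMap.smul_apply, hQ_basis]
    split_ifs with h
    · rw [(hev i).apply_eq_smul, h]
    · rw [map_zero, smul_zero]

theorem exists_eq_smul_of_isSelfAdjoint {A : StarSubalgebra ℂ (E →ₗ[ℂ] E)} {P : E →ₗ[ℂ] E}
    (hmin : ∀ Q ∈ A, IsSelfAdjoint Q → IsIdempotentElem Q → Q * P = Q → Q = 0 ∨ Q = P)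
    {B : E →ₗ[ℂ] E} (hBA : B ∈ A) (hB : IsSelfAdjoint B) (hBP : B * P = B) :
    ∃ c : ℂ, B = c • P := by
  rcases eq_or_ne B 0 with rfl | hB0
  · exact ⟨0, (zero_smul ℂ P).symm⟩
  obtain ⟨t, q, hQ, hQQ, hQ0, hBQ⟩ := hB.exists_eigenprojection hB0
  have hQA : Polynomial.aeval B (q * X) ∈ A :=
    Algebra.adjoin_le (S := A.toSubalgebra.restrictScalars ℝ) (Set.singleton_subset_iff.mpr hBA)
      (aeval_mem_adjoin_singleton ℝ B)
  have hQP : Polynomial.aeval B (q * X) * P = Polynomial.aeval B (q * X) := by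
    rw [map_mul, aeval_X, mul_assoc, hBP]
  obtain hQ0' | hQP' := hmin _ hQA hQ hQQ hQP
  · exact absurd hQ0' hQ0
  · exact ⟨t, by rw [← hBP, ← hQP', hBQ]⟩

theorem finrank_range_eq_of_star_mul_self_eq_smul {N P : E →ₗ[ℂ] E} {c : ℂ} (hN : N ≠ 0)
    (h : star N * N = c • P) :
    Module.finrank ℂ (LinearMap.range P) = Module.finrank ℂ (LinearMap.range N) := by
  have hrank : Module.finrank ℂ (LinearMap.range (star N * N)) =
      Module.finrank ℂ (LinearMap.range N) := by
    rw [LinearMap.star_eq_adjoint, Module.End.mul_eq_comp, LinearMap.range_adjoint_comp_self,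
      LinearMap.finrank_range_adjoint]
  have hc : c ≠ 0 := by
    rintro rfl
    rw [h, zero_smul, LinearMap.range_zero, finrank_bot, eq_comm,
      Submodule.finrank_eq_zero, LinearMap.range_eq_bot] at hrank
    exact hN hrank
  rw [← LinearMap.range_smul P c hc, ← h, hrank]

end InnerProductSpace

section ProjectorFamily

variable {E : Type*} [NormedAddCommGroup E] [InnerProductSpace ℂ E] [FiniteDimensional ℂ E]
  {A : StarSubalgebra ℂ (E →ₗ[ℂ] E)} {p : ℕ} {P : Fin p → (E →ₗ[ℂ] E)}

theorem IsOrthProjFamily.orthogonalIdempotents (hP : IsOrthProjFamily A P) :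
    OrthogonalIdempotents P :=
  OrthogonalIdempotents.iff_mul_eq.mpr hP.2.2.2

namespace IsMaximalOrthProjFamily

theorem eq_zero_or_eq (hP : IsMaximalOrthProjFamily A P) (j : Fin p) {Q : E →ₗ[ℂ] E}
    (hQA : Q ∈ A) (hQ : IsSelfAdjoint Q) (hQQ : IsIdempotentElem Q) (hQP : Q * P j = Q) :
    Q = 0 ∨ Q = P j := by
  have he := hP.1.orthogonalIdempotents
  obtain ⟨⟨hmem, hne, hstar, -⟩, hmax⟩ := hP
  have hPQ : P j * Q = Q := by
    simpa only [star_mul, hQ.star_eq, hstar j] using congrArg star hQP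
  by_contra! hQ'
  obtain ⟨hQ0, hQPj⟩ := hQ'
  -- Splitting `P j` into `Q` and `P j - Q` refines the family.
  set R : Fin (p + 1) → E →ₗ[ℂ] E := Fin.cons (P j - Q) (Function.update P j Q)
  have hR : IsOrthProjFamily A R := by
    have hupd (S : (E →ₗ[ℂ] E) → Prop) (hSQ : S Q) (hSP : ∀ i, S (P i)) (i : Fin p) :
        S (Function.update P j Q i) := by
      rcases eq_or_ne i j with rfl | hij
      · rwa [Function.update_self]
      · rw [Function.update_of_ne hij]
        exact hSP i
    refine ⟨Fin.cases ?_ (hupd _ hQA hmem), Fin.cases ?_ (hupd (· ≠ 0) hQ0 hne),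
      Fin.cases ?_ (hupd (fun x => star x = x) hQ.star_eq hstar),
      OrthogonalIdempotents.iff_mul_eq.mp (he.cons_sub_update hQQ hQP hPQ)⟩
    · exact sub_mem (hmem j) hQA
    · exact sub_ne_zero.mpr hQPj.symm
    · show star (P j - Q) = P j - Q
      rw [star_sub, hstar j, hQ.star_eq]
  have hPR : Algebra.adjoin ℂ (Set.range P) ≤ Algebra.adjoin ℂ (Set.range R) := by
    refine Algebra.adjoin_le (Set.range_subset_iff.mpr fun i => ?_)
    rcases eq_or_ne i j with rfl | hij
    · rw [← sub_add_cancel (P i) Q]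
      exact add_mem (Algebra.subset_adjoin ⟨0, rfl⟩) (Algebra.subset_adjoin ⟨i.succ, by simp [R]⟩)
    · exact Algebra.subset_adjoin ⟨i.succ, by simp [R, hij]⟩
  have hQR : Q ∈ Algebra.adjoin ℂ (Set.range R) := Algebra.subset_adjoin ⟨j.succ, by simp [R]⟩
  have hQP' : Q ∉ Algebra.adjoin ℂ (Set.range P) := fun h =>
    (he.eq_zero_or_eq_of_mem_adjoin h hQQ hQP).elim hQ0 hQPj
  exact hmax _ R hR (lt_of_le_of_ne hPR fun h => hQP' (h ▸ hQR))

theorem finrank_range_eq (hP : IsMaximalOrthProjFamily A P) {i j : Fin p}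
    (hij : ∃ M ∈ A, P i * M * P j ≠ 0) :
    Module.finrank ℂ (LinearMap.range (P i)) = Module.finrank ℂ (LinearMap.range (P j)) := by
  obtain ⟨hmem, -, hstar, hmul⟩ := hP.1
  obtain ⟨M, hMA, hN⟩ := hij
  set N := P i * M * P j
  have hNA : N ∈ A := mul_mem (mul_mem (hmem i) hMA) (hmem j)
  have hNP : N * P j = N := by simp only [N, mul_assoc, hmul, ↓reduceIte]
  have hPN : star N * P i = star N := by
    simp only [N, star_mul, hstar, mul_assoc, hmul, ↓reduceIte]
  obtain ⟨c, hc⟩ := exists_eq_smul_of_isSelfAdjoint (fun _ => hP.eq_zero_or_eq j)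
    (mul_mem (star_mem hNA) hNA) (.star_mul_self N) (by rw [mul_assoc, hNP])
  obtain ⟨d, hd⟩ := exists_eq_smul_of_isSelfAdjoint (fun _ => hP.eq_zero_or_eq i)
    (mul_mem hNA (star_mem hNA)) (.mul_star_self N) (by rw [mul_assoc, hPN])
  calc Module.finrank ℂ (LinearMap.range (P i))
      = Module.finrank ℂ (LinearMap.range (star N)) :=
        finrank_range_eq_of_star_mul_self_eq_smul (star_ne_zero.mpr hN) (by rwa [star_star])
    _ = Module.finrank ℂ (LinearMap.range N) := by
        rw [LinearMap.star_eq_adjoint, LinearMap.finrank_range_adjoint]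
    _ = Module.finrank ℂ (LinearMap.range (P j)) :=
        (finrank_range_eq_of_star_mul_self_eq_smul hN hc).symm

end IsMaximalOrthProjFamily

end ProjectorFamily

theorem projectors_same_rank
    {E : Type*} [NormedAddCommGroup E] [InnerProductSpace ℂ E] [FiniteDimensional ℂ E]
    (A : StarSubalgebra ℂ (E →ₗ[ℂ] E)) {p : ℕ} (P : Fin p → (E →ₗ[ℂ] E))
    (hP : IsMaximalOrthProjFamily A P) (hsum : ∑ i, P i = 1)
    (hclass : ∀ i j, ∃ M ∈ A, P i * M * P j ≠ 0) :
    ∃ q : ℕ, (∀ i, Module.finrank ℂ (LinearMap.range (P i)) = q) ∧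
      p * q = Module.finrank ℂ E := by
  obtain ⟨q, hq⟩ : ∃ q, ∀ i, Module.finrank ℂ (LinearMap.range (P i)) = q := by
    rcases isEmpty_or_nonempty (Fin p) with _ | ⟨⟨i₀⟩⟩
    · exact ⟨0, isEmptyElim⟩
    · exact ⟨_, fun i => hP.finrank_range_eq (hclass i i₀)⟩
  refine ⟨q, hq, ?_⟩
  rw [← Module.End.sum_finrank_range_eq_finrank hP.1.orthogonalIdempotents.idem hsum]
  simp [hq]
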